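/- For x ∈ ℝ² with r = |x| ≠ 0 and n ≥ 1, define B₀ = 0, C₀ = 1, C_{n+1} = C_n/(4(n+1)²), B_{n+1} = (C_n/(n+1) + B_n)/(4(n+1)²). Then the function u_n(x) = (r^{2n}/(2π))(C_n ln r - B_n) satisfies Δu_n = u_{n-1} for all x ≠ 0, and consequently Δ^{n+1} u_n = 0 away from the origin. -/

import Mathlib

open Real Filter Topology

/-- Laplacian of a function of two real variables, via iterated `deriv`. -/
noncomputable def lap2 (u : ℝ → ℝ → ℝ) (x y : ℝ) : ℝ :=
  deriv (deriv (fun t => u t y)) x + deriv (deriv (fun t => u x t)) y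

/-- Iterated 2D Laplacian. -/
noncomputable def lap2Iter : ℕ → (ℝ → ℝ → ℝ) → (ℝ → ℝ → ℝ)
  | 0, u => u
  | m + 1, u => fun x y => lap2 (lap2Iter m u) x y

/-- The coefficients `C_n` with `C₀ = 1`, `C_{n+1} = C_n/(4(n+1)²)`. -/
noncomputable def Cseq : ℕ → ℝ
  | 0 => 1
  | n + 1 => Cseq n / (4 * ((n : ℝ) + 1) ^ 2)

/-- The coefficients `B_n` with `B₀ = 0`, `B_{n+1} = (C_n/(n+1) + B_n)/(4(n+1)²)`. -/
noncomputable def Bseq : ℕ → ℝ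
  | 0 => 0
  | n + 1 => (Cseq n / ((n : ℝ) + 1) + Bseq n) / (4 * ((n : ℝ) + 1) ^ 2)

/-! ### Auxiliary derivative computations -/

lemma hasDerivAt_wfun (m : ℕ) (a b s : ℝ) (hs : 0 < s) :
    HasDerivAt (fun s : ℝ => s ^ m * (a * Real.log s + b))
      (s ^ m * (((m : ℝ) * a) * Real.log s + ((m : ℝ) * b + a)) / s) s := by
  have h1 : HasDerivAt (fun s : ℝ => s ^ m) ((m : ℝ) * s ^ (m - 1)) s := hasDerivAt_pow m s
  have h2 : HasDerivAt (fun s : ℝ => a * Real.log s + b) (a * s⁻¹) s :=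
    ((Real.hasDerivAt_log hs.ne').const_mul a).add_const b
  have h3 : HasDerivAt (fun s : ℝ => s ^ m * (a * Real.log s + b)) _ s := h1.mul h2
  convert h3 using 1
  cases m with
  | zero => field_simp; simp
  | succ k =>
    simp only [Nat.succ_sub_one, pow_succ]
    field_simp
    ring

lemma hasDerivAt_comp_w (m : ℕ) (a b y t : ℝ) (h : 0 < t ^ 2 + y ^ 2) :
    HasDerivAt (fun t : ℝ => (t ^ 2 + y ^ 2) ^ m * (a * Real.log (t ^ 2 + y ^ 2) + b))
      (2 * t * ((t ^ 2 + y ^ 2) ^ m *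
        (((m : ℝ) * a) * Real.log (t ^ 2 + y ^ 2) + ((m : ℝ) * b + a)) / (t ^ 2 + y ^ 2))) t := by
  have hin : HasDerivAt (fun t : ℝ => t ^ 2 + y ^ 2) (2 * t) t := by
    simpa using ((hasDerivAt_pow 2 t).add_const (y ^ 2))
  have h3 : HasDerivAt (fun t : ℝ => (t ^ 2 + y ^ 2) ^ m * (a * Real.log (t ^ 2 + y ^ 2) + b)) _ t :=
    (hasDerivAt_wfun m a b _ h).comp (h₂ := fun s : ℝ => s ^ m * (a * Real.log s + b)) t hin
  convert h3 using 1; ring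

lemma ev_pos {x y : ℝ} (h : 0 < x ^ 2 + y ^ 2) : ∀ᶠ t in 𝓝 x, 0 < t ^ 2 + y ^ 2 := by
  have hc : Continuous fun t : ℝ => t ^ 2 + y ^ 2 := by continuity
  exact (hc.tendsto x).eventually (eventually_gt_nhds h)

lemma deriv2_line (m : ℕ) (a b x y : ℝ) (h : 0 < x ^ 2 + y ^ 2) :
    deriv (deriv (fun t => (t ^ 2 + y ^ 2) ^ (m + 1) * (a * Real.log (t ^ 2 + y ^ 2) + b))) x
      = 2 * ((x ^ 2 + y ^ 2) ^ m *
            ((((m : ℝ) + 1) * a) * Real.log (x ^ 2 + y ^ 2) + (((m : ℝ) + 1) * b + a)))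
        + 2 * x * (2 * x * ((x ^ 2 + y ^ 2) ^ m *
            (((m : ℝ) * (((m : ℝ) + 1) * a)) * Real.log (x ^ 2 + y ^ 2) +
              ((m : ℝ) * (((m : ℝ) + 1) * b + a) + (((m : ℝ) + 1) * a))) / (x ^ 2 + y ^ 2))) := by
  set A := ((m : ℝ) + 1) * a with hA
  set B := ((m : ℝ) + 1) * b + a with hB
  have h1 : deriv (fun t => (t ^ 2 + y ^ 2) ^ (m + 1) * (a * Real.log (t ^ 2 + y ^ 2) + b))
      =ᶠ[𝓝 x] fun t => 2 * t * ((t ^ 2 + y ^ 2) ^ m * (A * Real.log (t ^ 2 + y ^ 2) + B)) := by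
    filter_upwards [ev_pos h] with t ht
    rw [(hasDerivAt_comp_w (m + 1) a b y t ht).deriv, pow_succ]
    push_cast
    field_simp
    ring
  rw [h1.deriv_eq]
  have hf : HasDerivAt (fun t : ℝ => 2 * t) 2 x := by
    simpa using (hasDerivAt_id x).const_mul (2 : ℝ)
  have h2 : HasDerivAt (fun t : ℝ => 2 * t * ((t ^ 2 + y ^ 2) ^ m * (A * Real.log (t ^ 2 + y ^ 2) + B))) _ x :=
    hf.mul (hasDerivAt_comp_w m A B y x h)
  rw [h2.deriv]

lemma lap2_polyv (m : ℕ) (a b x y : ℝ) (h : 0 < x ^ 2 + y ^ 2) :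
    lap2 (fun x y => (x ^ 2 + y ^ 2) ^ (m + 1) * (a * Real.log (x ^ 2 + y ^ 2) + b)) x y
      = (x ^ 2 + y ^ 2) ^ m *
          ((4 * ((m : ℝ) + 1) ^ 2 * a) * Real.log (x ^ 2 + y ^ 2) +
            (4 * ((m : ℝ) + 1) ^ 2 * b + 8 * ((m : ℝ) + 1) * a)) := by
  have h' : 0 < y ^ 2 + x ^ 2 := by linarith [h]
  unfold lap2
  have e1 : (fun t => (x ^ 2 + t ^ 2) ^ (m + 1) * (a * Real.log (x ^ 2 + t ^ 2) + b))
      = fun t => (t ^ 2 + x ^ 2) ^ (m + 1) * (a * Real.log (t ^ 2 + x ^ 2) + b) := by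
    funext t; rw [add_comm (x ^ 2)]
  rw [e1, deriv2_line m a b x y h, deriv2_line m a b y x h']
  have hxy : y ^ 2 + x ^ 2 = x ^ 2 + y ^ 2 := by ring
  rw [hxy]
  field_simp
  ring

lemma deriv2_line_log (a b x y : ℝ) (h : 0 < x ^ 2 + y ^ 2) :
    deriv (deriv (fun t => a * Real.log (t ^ 2 + y ^ 2) + b)) x
      = 2 * (a / (x ^ 2 + y ^ 2)) + 2 * x * (a * (-(2 * x) / (x ^ 2 + y ^ 2) ^ 2)) := by
  have h1 : deriv (fun t => a * Real.log (t ^ 2 + y ^ 2) + b)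
      =ᶠ[𝓝 x] fun t => 2 * t * (a * ((t ^ 2 + y ^ 2)⁻¹)) := by
    filter_upwards [ev_pos h] with t ht
    have hin : HasDerivAt (fun t : ℝ => t ^ 2 + y ^ 2) (2 * t) t := by
      simpa using ((hasDerivAt_pow 2 t).add_const (y ^ 2))
    have hl : HasDerivAt (fun t : ℝ => a * Real.log (t ^ 2 + y ^ 2) + b)
        (a * ((t ^ 2 + y ^ 2)⁻¹ * (2 * t))) t :=
      (((Real.hasDerivAt_log ht.ne').comp (h₂ := Real.log) t hin).const_mul a).add_const b
    rw [hl.deriv]; ring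
  rw [h1.deriv_eq]
  have hf : HasDerivAt (fun t : ℝ => 2 * t) 2 x := by
    simpa using (hasDerivAt_id x).const_mul (2 : ℝ)
  have hin : HasDerivAt (fun t : ℝ => t ^ 2 + y ^ 2) (2 * x) x := by
    simpa using ((hasDerivAt_pow 2 x).add_const (y ^ 2))
  have hg : HasDerivAt (fun t : ℝ => a * ((t ^ 2 + y ^ 2)⁻¹))
      (a * (-(2 * x) / (x ^ 2 + y ^ 2) ^ 2)) x := (hin.inv h.ne').const_mul a
  have h2 : HasDerivAt (fun t : ℝ => 2 * t * (a * ((t ^ 2 + y ^ 2)⁻¹))) _ x := hf.mul hg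
  rw [h2.deriv]
  ring

lemma lap2_loga (a b x y : ℝ) (h : 0 < x ^ 2 + y ^ 2) :
    lap2 (fun x y => a * Real.log (x ^ 2 + y ^ 2) + b) x y = 0 := by
  have h' : 0 < y ^ 2 + x ^ 2 := by linarith [h]
  unfold lap2
  have e1 : (fun t => a * Real.log (x ^ 2 + t ^ 2) + b)
      = fun t => a * Real.log (t ^ 2 + x ^ 2) + b := by
    funext t; rw [add_comm (x ^ 2)]
  rw [e1, deriv2_line_log a b x y h, deriv2_line_log a b y x h']
  have hxy : y ^ 2 + x ^ 2 = x ^ 2 + y ^ 2 := by ring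
  rw [hxy]
  field_simp
  ring

lemma lap2_congr {f g : ℝ → ℝ → ℝ} {x y : ℝ}
    (hf : ∀ᶠ p : ℝ × ℝ in 𝓝 (x, y), f p.1 p.2 = g p.1 p.2) :
    lap2 f x y = lap2 g x y := by
  have hx : Tendsto (fun t : ℝ => (t, y)) (𝓝 x) (𝓝 (x, y)) :=
    (continuous_id.prodMk continuous_const).tendsto x
  have hy : Tendsto (fun t : ℝ => (x, t)) (𝓝 y) (𝓝 (x, y)) :=
    (continuous_const.prodMk continuous_id).tendsto y
  have h1 : (fun t => f t y) =ᶠ[𝓝 x] fun t => g t y := hx.eventually hf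
  have h2 : (fun t => f x t) =ᶠ[𝓝 y] fun t => g x t := hy.eventually hf
  unfold lap2
  rw [h1.deriv.deriv_eq, h2.deriv.deriv_eq]

/-! ### The fundamental solutions -/

noncomputable def Ufun (n : ℕ) : ℝ → ℝ → ℝ := fun x y =>
  (Real.sqrt (x ^ 2 + y ^ 2)) ^ (2 * n) / (2 * Real.pi) *
    (Cseq n * Real.log (Real.sqrt (x ^ 2 + y ^ 2)) - Bseq n)

lemma Ufun_eq (n : ℕ) :
    Ufun n = fun x y => (x ^ 2 + y ^ 2) ^ n *
      ((Cseq n / (4 * Real.pi)) * Real.log (x ^ 2 + y ^ 2) + (-(Bseq n) / (2 * Real.pi))) := by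
  funext x y
  have hs0 : (0 : ℝ) ≤ x ^ 2 + y ^ 2 := by positivity
  unfold Ufun
  rw [show (Real.sqrt (x ^ 2 + y ^ 2)) ^ (2 * n) = (x ^ 2 + y ^ 2) ^ n by
    rw [pow_mul, Real.sq_sqrt hs0], Real.log_sqrt hs0]
  field_simp
  ring

lemma pos_of_pair {x y : ℝ} (h : (x, y) ≠ ((0 : ℝ), (0 : ℝ))) : 0 < x ^ 2 + y ^ 2 := by
  rcases eq_or_ne x 0 with hx | hx
  · subst hx
    have hy : y ≠ 0 := fun hy => h (by rw [hy])
    positivity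
  · positivity

lemma lap_U (m : ℕ) {x y : ℝ} (h : (x, y) ≠ ((0 : ℝ), (0 : ℝ))) :
    lap2 (Ufun (m + 1)) x y = Ufun m x y := by
  have hpos := pos_of_pair h
  have hπ : Real.pi ≠ 0 := Real.pi_ne_zero
  have hm1 : ((m : ℝ) + 1) ≠ 0 := by positivity
  rw [Ufun_eq (m + 1), Ufun_eq m,
    lap2_polyv m (Cseq (m + 1) / (4 * Real.pi)) (-(Bseq (m + 1)) / (2 * Real.pi)) x y hpos]
  have hC : Cseq (m + 1) = Cseq m / (4 * ((m : ℝ) + 1) ^ 2) := rfl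
  have hB : Bseq (m + 1) = (Cseq m / ((m : ℝ) + 1) + Bseq m) / (4 * ((m : ℝ) + 1) ^ 2) := rfl
  rw [hC, hB]
  field_simp
  ring

/-- The 2D polyharmonic fundamental solutions
`u_n = (r^{2n}/(2π))(C_n ln r - B_n)` satisfy `Δu_n = u_{n-1}` away from the
origin for `n ≥ 1`, and hence `Δ^{n+1} u_n = 0` away from the origin. -/
theorem stmt17 (u : ℕ → ℝ → ℝ → ℝ)
    (hu : u = fun n x y =>
      (Real.sqrt (x ^ 2 + y ^ 2)) ^ (2 * n) / (2 * Real.pi) *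
        (Cseq n * Real.log (Real.sqrt (x ^ 2 + y ^ 2)) - Bseq n))
    (n : ℕ) (hn : 1 ≤ n) (x y : ℝ) (h : (x, y) ≠ (0, 0)) :
    lap2 (u n) x y = u (n - 1) x y ∧ lap2Iter (n + 1) (u n) x y = 0 := by
  have hU : u = Ufun := by rw [hu]; rfl
  subst hU
  obtain ⟨m, rfl⟩ : ∃ m, n = m + 1 := ⟨n - 1, (Nat.succ_pred_eq_of_pos hn).symm⟩
  have key : ∀ k, k ≤ m + 1 → ∀ x y : ℝ, (x, y) ≠ ((0 : ℝ), (0 : ℝ)) →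
      lap2Iter k (Ufun (m + 1)) x y = Ufun (m + 1 - k) x y := by
    intro k
    induction k with
    | zero => intro _ x y _; rfl
    | succ j ih =>
      intro hk x y hxy
      show lap2 (lap2Iter j (Ufun (m + 1))) x y = _
      have hcong : lap2 (lap2Iter j (Ufun (m + 1))) x y = lap2 (Ufun (m + 1 - j)) x y := by
        apply lap2_congr
        have hmem : ({((0 : ℝ), (0 : ℝ))}ᶜ : Set (ℝ × ℝ)) ∈ nhds (x, y) :=
          isOpen_compl_singleton.mem_nhds hxy
        filter_upwards [hmem] with p hp
        exact ih (Nat.le_of_succ_le hk) p.1 p.2 (by simpa using hp)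
      rw [hcong]
      have hsplit : m + 1 - j = (m + 1 - (j + 1)) + 1 := by omega
      rw [hsplit]
      exact lap_U _ hxy
  constructor
  · simpa using lap_U m h
  · show lap2 (lap2Iter (m + 1) (Ufun (m + 1))) x y = 0
    have hcong : lap2 (lap2Iter (m + 1) (Ufun (m + 1))) x y = lap2 (Ufun 0) x y := by
      apply lap2_congr
      have hmem : ({((0 : ℝ), (0 : ℝ))}ᶜ : Set (ℝ × ℝ)) ∈ nhds (x, y) :=
        isOpen_compl_singleton.mem_nhds h
      filter_upwards [hmem] with p hp
      simpa using key (m + 1) le_rfl p.1 p.2 (by simpa using hp)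
    rw [hcong]
    have hU0 : Ufun 0 = fun x y =>
        (Cseq 0 / (4 * Real.pi)) * Real.log (x ^ 2 + y ^ 2) + (-(Bseq 0) / (2 * Real.pi)) := by
      rw [Ufun_eq 0]; funext x y; simp
    rw [hU0]
    exact lap2_loga _ _ x y (pos_of_pair h)
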